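/- For all positive integers m and n, the sum over divisors a of m and b of n of φ(gcd(a,b)) equals the sum over divisors u of gcd(m,n) of (φ*μ)(u)·τ(m/u)·τ(n/u), where * denotes Dirichlet convolution and μ the Möbius function. -/

import Mathlib

/-!
Möbius inversion writes `φ = (φ * μ) * ζ`, so that `φ (gcd a b) = ∑_{u ∣ a, u ∣ b} (φ * μ) u`.
Exchanging the order of summation, each `u ∣ gcd m n` is counted once for every pair of
multiples `a ∣ m`, `b ∣ n` of `u`, that is `τ (m / u) * τ (n / u)` times.
-/

open Finset ArithmeticFunction
open scoped ArithmeticFunction.Moebius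

namespace Nat

theorem sum_divisors_sum_divisors_mul_moebius {R : Type*} [CommRing R] (f : ℕ → R) {k : ℕ}
    (hk : k ≠ 0) : ∑ u ∈ k.divisors, ∑ d ∈ u.divisors, f d * μ (u / d) = f k := by
  refine (sum_eq_iff_sum_mul_moebius_eq (g := f) |>.mpr (fun u _ => ?_)) k (pos_of_ne_zero hk)
  rw [sum_divisorsAntidiagonal' fun x y => (μ x : R) * f y]
  exact sum_congr rfl fun d _ => mul_comm _ _

theorem card_divisors_filter_dvd {u n : ℕ} (hu : u ∣ n) :
    #{b ∈ n.divisors | u ∣ b} = #(n / u).divisors := by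
  rcases eq_or_ne n 0 with rfl | hn
  · simp
  obtain ⟨k, rfl⟩ := hu
  have hu : 0 < u := pos_of_ne_zero (left_ne_zero_of_mul hn)
  rw [Nat.mul_div_cancel_left k hu]
  refine card_nbij' (· / u) (u * ·) ?_ ?_ ?_ ?_ <;>
    simp only [Set.MapsTo, Set.LeftInvOn, coe_filter, mem_coe, mem_divisors]
  · rintro _ ⟨⟨hbk, -⟩, c, rfl⟩
    simp_all [Nat.mul_div_cancel_left c hu, Nat.mul_dvd_mul_iff_left hu]
  · rintro c ⟨hck, -⟩
    simp_all [Nat.mul_dvd_mul_iff_left hu]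
  · rintro _ ⟨-, c, rfl⟩
    simp [Nat.mul_div_cancel_left c hu]
  · intro c _
    simp [Nat.mul_div_cancel_left c hu]

theorem sum_divisors_sum_divisors_gcd {M : Type*} [AddCommMonoid M] (f : ℕ → M) (a n : ℕ) :
    ∑ b ∈ n.divisors, ∑ u ∈ (a.gcd b).divisors, f u =
      ∑ u ∈ (a.gcd n).divisors, #(n / u).divisors • f u := by
  rcases eq_or_ne n 0 with rfl | hn
  · simp
  rw [sum_comm' (t' := (a.gcd n).divisors) (s' := fun u => {b ∈ n.divisors | u ∣ b})]
  · refine sum_congr rfl fun u hu => ?_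
    rw [sum_const,
      card_divisors_filter_dvd ((dvd_of_mem_divisors hu).trans (gcd_dvd_right a n))]
  · intro b u
    simp only [mem_divisors, mem_filter, dvd_gcd_iff]
    constructor
    · rintro ⟨⟨hbn, -⟩, ⟨hua, hub⟩, -⟩
      exact ⟨⟨⟨hbn, hn⟩, hub⟩, ⟨hua, hub.trans hbn⟩, gcd_ne_zero_right hn⟩
    · rintro ⟨⟨⟨hbn, -⟩, hub⟩, ⟨hua, -⟩, -⟩
      exact ⟨⟨hbn, hn⟩, ⟨hua, hub⟩, gcd_ne_zero_right (ne_zero_of_dvd_ne_zero hn hbn)⟩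

end Nat

theorem totient_gcd_divisor_sum_eq_general (m n : ℕ) :
    (∑ a ∈ m.divisors, ∑ b ∈ n.divisors, (Nat.totient (Nat.gcd a b) : ℤ)) =
      ∑ u ∈ (Nat.gcd m n).divisors,
        (∑ d ∈ u.divisors, (Nat.totient d : ℤ) * ArithmeticFunction.moebius (u / d)) *
          (m / u).divisors.card * (n / u).divisors.card := by
  set g : ℕ → ℤ := fun u => ∑ d ∈ u.divisors, (d.totient : ℤ) * μ (u / d)
  calc (∑ a ∈ m.divisors, ∑ b ∈ n.divisors, (Nat.totient (Nat.gcd a b) : ℤ))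
      = ∑ a ∈ m.divisors, ∑ b ∈ n.divisors, ∑ u ∈ (a.gcd b).divisors, g u := by
        refine sum_congr rfl fun a ha => sum_congr rfl fun b _ => ?_
        have hab : a.gcd b ≠ 0 := Nat.gcd_ne_zero_left (Nat.pos_of_mem_divisors ha).ne'
        simpa using (Nat.sum_divisors_sum_divisors_mul_moebius (fun d => (d.totient : ℤ)) hab).symm
    _ = ∑ u ∈ (n.gcd m).divisors, #(m / u).divisors • #(n / u).divisors • g u := by
        simp_rw [Nat.sum_divisors_sum_divisors_gcd, Nat.gcd_comm _ n,
          Nat.sum_divisors_sum_divisors_gcd]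
    _ = _ := by
        rw [Nat.gcd_comm]
        refine sum_congr rfl fun u _ => ?_
        simp only [nsmul_eq_mul]
        ring

theorem totient_gcd_divisor_sum_eq (m n : ℕ) (hm : 0 < m) (hn : 0 < n) :
    (∑ a ∈ m.divisors, ∑ b ∈ n.divisors, (Nat.totient (Nat.gcd a b) : ℤ)) =
      ∑ u ∈ (Nat.gcd m n).divisors,
        (∑ d ∈ u.divisors, (Nat.totient d : ℤ) * ArithmeticFunction.moebius (u / d)) *
          (m / u).divisors.card * (n / u).divisors.card :=
  totient_gcd_divisor_sum_eq_general m n
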